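/- Let points p_0, p_1, ..., p_k in the Euclidean plane lie consecutively along an axis-parallel L-shaped path (a horizontal segment followed by a vertical segment, with at most one bend), with consecutive points at Euclidean distance exactly 1 and the bend occurring at one of the points. Then for any indices i, j with |i - j| ≥ 2, the Euclidean distance between p_i and p_j is at least √2, and in particular greater than 1. -/

import Mathlib

/-! Each step along the path raises `x + y` by exactly one, so if `|i - j| ≥ 2` the coordinate
differences `u, v` of `p i - p j` satisfy `|u + v| ≥ 2`, and then `u² + v² ≥ (u + v)² / 2 ≥ 2`. -/

lemma fst_add_snd_eq_of_lShapedPath {k b : ℕ} {x0 y0 : ℝ} {p : ℕ → ℝ × ℝ}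
    (hhor : ∀ i ≤ b, p i = (x0 + i, y0))
    (hver : ∀ i, b ≤ i → i ≤ k → p i = (x0 + b, y0 + (i - b : ℕ)))
    {n : ℕ} (hn : n ≤ k) :
    (p n).1 + (p n).2 = x0 + y0 + n := by
  rcases le_or_gt n b with hnb | hbn
  · rw [hhor n hnb]
    ring
  · rw [hver n hbn.le hn, Nat.cast_sub hbn.le]
    ring

lemma two_le_sq_add_sq_of_two_le_abs_add {u v : ℝ} (h : 2 ≤ |u + v|) : 2 ≤ u ^ 2 + v ^ 2 := by
  nlinarith [add_sq_le (a := u) (b := v), sq_abs (u + v)]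

theorem stmt1_general (k b : ℕ) (x0 y0 : ℝ) (p : ℕ → ℝ × ℝ)
    (hhor : ∀ i ≤ b, p i = (x0 + i, y0))
    (hver : ∀ i, b ≤ i → i ≤ k → p i = (x0 + b, y0 + (i - b : ℕ)))
    (i j : ℕ) (hi : i ≤ k) (hj : j ≤ k) (hij : 2 ≤ |(i : ℤ) - j|) :
    Real.sqrt (((p i).1 - (p j).1) ^ 2 + ((p i).2 - (p j).2) ^ 2) ≥ Real.sqrt 2 ∧
    Real.sqrt (((p i).1 - (p j).1) ^ 2 + ((p i).2 - (p j).2) ^ 2) > 1 := by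
  have hdiff : (p i).1 - (p j).1 + ((p i).2 - (p j).2) = i - j := by
    linarith [fst_add_snd_eq_of_lShapedPath hhor hver hi, fst_add_snd_eq_of_lShapedPath hhor hver hj]
  have hij' : 2 ≤ |(p i).1 - (p j).1 + ((p i).2 - (p j).2)| := by
    rw [hdiff]
    exact_mod_cast hij
  have hdist := Real.sqrt_le_sqrt (two_le_sq_add_sq_of_two_le_abs_add hij')
  exact ⟨hdist, Real.one_lt_sqrt_two.trans_le hdist⟩

/-- Points at unit spacing along an axis-parallel L-shaped path (horizontal then
vertical, with at most one bend): any two points with index difference at least 2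
are at Euclidean distance at least √2 > 1. -/
theorem stmt1 (k b : ℕ) (hb : b ≤ k) (x0 y0 : ℝ) (p : ℕ → ℝ × ℝ)
    (hhor : ∀ i ≤ b, p i = (x0 + i, y0))
    (hver : ∀ i, b ≤ i → i ≤ k → p i = (x0 + b, y0 + (i - b : ℕ)))
    (i j : ℕ) (hi : i ≤ k) (hj : j ≤ k) (hij : 2 ≤ |(i : ℤ) - j|) :
    Real.sqrt (((p i).1 - (p j).1) ^ 2 + ((p i).2 - (p j).2) ^ 2) ≥ Real.sqrt 2 ∧
    Real.sqrt (((p i).1 - (p j).1) ^ 2 + ((p i).2 - (p j).2) ^ 2) > 1 :=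
  stmt1_general k b x0 y0 p hhor hver i j hi hj hij
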